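/- arXiv:1902.08614 — 2 statements merged into one kernel-verified Lean document; each statement's English description precedes it below -/
import Mathlib

section
/- If s and c are differentiable complex-valued functions on a connected open set U containing 0 satisfying s' = c(1+s²), c' = -s(1+c²), s(0)=0, c(0)=1, then (s')² = 1 - s⁴ throughout U. -/
/-! The quantity `(1 + s²)(1 + c²)` is a first integral of the system: its derivative is
`2 s c (1 + s²)(1 + c²) - 2 c s (1 + c²)(1 + s²) = 0`. Having zero derivative on the connected
open set `U`, it equals its value `2` at the origin, i.e. `c² (1 + s²) = 1 - s²`, and then
`(s')² = c² (1 + s²)² = (1 - s²)(1 + s²) = 1 - s⁴`. -/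

section LemniscaticSystem

variable {𝕜 : Type*} {s c : 𝕜 → 𝕜}

theorem hasDerivAt_lemniscatic_invariant [NontriviallyNormedField 𝕜] {z : 𝕜}
    (hs : HasDerivAt s (c z * (1 + s z ^ 2)) z) (hc : HasDerivAt c (-(s z) * (1 + c z ^ 2)) z) :
    HasDerivAt (fun w ↦ (1 + s w ^ 2) * (1 + c w ^ 2)) 0 z := by
  exact (((hs.pow 2).const_add 1).mul ((hc.pow 2).const_add 1)).congr_deriv
    (by simp only [Pi.pow_apply]; ring)

theorem lemniscatic_invariant_eq_two [RCLike 𝕜] {U : Set 𝕜} (hU : IsOpen U)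
    (hU' : IsPreconnected U) (h0 : (0 : 𝕜) ∈ U)
    (hs : ∀ z ∈ U, HasDerivAt s (c z * (1 + s z ^ 2)) z)
    (hc : ∀ z ∈ U, HasDerivAt c (-(s z) * (1 + c z ^ 2)) z)
    (hs0 : s 0 = 0) (hc0 : c 0 = 1) {z : 𝕜} (hz : z ∈ U) :
    (1 + s z ^ 2) * (1 + c z ^ 2) = 2 := by
  have hI : ∀ w ∈ U, HasDerivAt (fun w ↦ (1 + s w ^ 2) * (1 + c w ^ 2)) 0 w := fun w hw ↦
    hasDerivAt_lemniscatic_invariant (hs w hw) (hc w hw)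
  have hconst := hU.is_const_of_deriv_eq_zero hU'
    (fun w hw ↦ (hI w hw).differentiableAt.differentiableWithinAt)
    (fun w hw ↦ (hI w hw).deriv) hz h0
  rw [hconst, hs0, hc0]
  norm_num

end LemniscaticSystem

theorem lemniscatic_deriv_sq
    (U : Set ℂ) (hU : IsOpen U) (hConn : IsConnected U) (h0 : (0 : ℂ) ∈ U)
    (s c : ℂ → ℂ)
    (hs : ∀ z ∈ U, HasDerivAt s (c z * (1 + s z ^ 2)) z)
    (hc : ∀ z ∈ U, HasDerivAt c (-(s z) * (1 + c z ^ 2)) z)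
    (hs0 : s 0 = 0) (hc0 : c 0 = 1) :
    ∀ z ∈ U, (deriv s z) ^ 2 = 1 - s z ^ 4 := by
  intro z hz
  have hI := lemniscatic_invariant_eq_two hU hConn.isPreconnected h0 hs hc hs0 hc0 hz
  rw [(hs z hz).deriv]
  linear_combination (1 + s z ^ 2) * hI
end

section
/- Let s be analytic on B_r(0) with s(0)=0, |s| < 1 on B_r(0), and s'(z) = (1-s(z)⁴)^(1/2) (principal branch). Then for every z ∈ B_r(0), z equals the integral from 0 to s(z) (along the segment [0, s(z)]) of dσ/(1-σ⁴)^(1/2). -/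
/-!
The integrand `φ σ = (1 - σ⁴)^(-1/2)` is holomorphic on the unit disc, so it has a primitive `G`
there. Integrating along the segment `[0, s z]` gives `G (s z) - G 0`, while `G ∘ s` has derivative
`φ (s z) * s' z = 1`, so that `G (s z) - G (s 0) = z`.
-/

open Complex Metric Set

lemma one_sub_pow_mem_slitPlane {σ : ℂ} {n : ℕ} (hn : n ≠ 0) (hσ : ‖σ‖ < 1) :
    1 - σ ^ n ∈ slitPlane := by
  rw [sub_eq_add_neg]
  apply mem_slitPlane_of_norm_lt_one
  rw [norm_neg, norm_pow]
  exact pow_lt_one₀ (norm_nonneg σ) hσ hn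

lemma one_sub_pow_cpow_ne_zero {σ : ℂ} {n : ℕ} (hn : n ≠ 0) (hσ : ‖σ‖ < 1) (a : ℂ) :
    (1 - σ ^ n) ^ a ≠ 0 :=
  cpow_ne_zero_iff.2 (Or.inl (slitPlane_ne_zero (one_sub_pow_mem_slitPlane hn hσ)))

lemma differentiableOn_inv_one_sub_pow_cpow {n : ℕ} (hn : n ≠ 0) (a : ℂ) :
    DifferentiableOn ℂ (fun σ : ℂ => ((1 - σ ^ n) ^ a)⁻¹) (ball 0 1) := by
  refine (((differentiableOn_const 1).sub (differentiableOn_pow n)).cpow_const ?_).inv ?_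
  · exact fun σ hσ => one_sub_pow_mem_slitPlane hn (mem_ball_zero_iff.1 hσ)
  · exact fun σ hσ => one_sub_pow_cpow_ne_zero hn (mem_ball_zero_iff.1 hσ) a

lemma smul_integral_comp_mul_eq_sub_of_hasDerivAt {𝕜 E : Type*} [RCLike 𝕜]
    [NormedAddCommGroup E] [NormedSpace ℝ E] [NormedSpace 𝕜 E] [IsScalarTower ℝ 𝕜 E]
    [CompleteSpace E]
    {F f : 𝕜 → E} {R : ℝ} (hF : ∀ σ ∈ ball 0 R, HasDerivAt F (f σ) σ)
    (hf : ContinuousOn f (ball 0 R)) {w : 𝕜} (hw : w ∈ ball 0 R) :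
    w • ∫ t in (0 : ℝ)..1, f (t * w) = F w - F 0 := by
  have hseg : ∀ t ∈ Icc (0 : ℝ) 1, (0 : 𝕜) + t • w ∈ ball 0 R := by
    intro t ht
    rw [zero_add, mem_ball_zero_iff, norm_smul, Real.norm_of_nonneg ht.1]
    exact (mul_le_of_le_one_left (norm_nonneg w) ht.2).trans_lt (mem_ball_zero_iff.1 hw)
  have hcont : ContinuousOn (fun t : ℝ => f (0 + t • w)) (Icc 0 1) :=
    hf.comp (by fun_prop) hseg
  simpa [RCLike.real_smul_eq_coe_mul] using
    intervalIntegral.integral_unitInterval_deriv_eq_sub hcont fun t ht => hF _ (hseg t ht)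

theorem lemniscatic_integral_formula_general
    (s : ℂ → ℂ)
    (hs0 : s 0 = 0)
    (hbd : ∀ z ∈ Metric.ball (0 : ℂ) ((2 : ℝ) ^ (-(1 : ℝ) / 2)), ‖s z‖ < 1)
    (hs : ∀ z ∈ Metric.ball (0 : ℂ) ((2 : ℝ) ^ (-(1 : ℝ) / 2)),
      HasDerivAt s ((1 - s z ^ 4) ^ ((1 : ℂ) / 2)) z) :
    ∀ z ∈ Metric.ball (0 : ℂ) ((2 : ℝ) ^ (-(1 : ℝ) / 2)),
      z = ∫ t in (0 : ℝ)..1, s z / ((1 - ((t : ℂ) * s z) ^ 4) ^ ((1 : ℂ) / 2)) := by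
  intro z hz
  set φ : ℂ → ℂ := fun σ => ((1 - σ ^ 4) ^ ((1 : ℂ) / 2))⁻¹
  have hφ : DifferentiableOn ℂ φ (ball 0 1) :=
    differentiableOn_inv_one_sub_pow_cpow four_ne_zero _
  obtain ⟨G, hG⟩ := hφ.isExactOn_ball
  have hGs : ∀ y ∈ ball (0 : ℂ) ((2 : ℝ) ^ (-(1 : ℝ) / 2)), HasDerivAt (G ∘ s) 1 y :=
    fun y hy => ((hG _ (mem_ball_zero_iff.2 (hbd y hy))).comp y (hs y hy)).congr_deriv
      (inv_mul_cancel₀ (one_sub_pow_cpow_ne_zero four_ne_zero (hbd y hy) _))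
  have hGz : z = G (s z) - G 0 := by
    simpa [hs0] using smul_integral_comp_mul_eq_sub_of_hasDerivAt hGs continuousOn_const hz
  have hGsz : s z * ∫ t in (0 : ℝ)..1, φ (t * s z) = G (s z) - G 0 :=
    smul_integral_comp_mul_eq_sub_of_hasDerivAt hG hφ.continuousOn
      (mem_ball_zero_iff.2 (hbd z hz))
  calc z = s z * ∫ t in (0 : ℝ)..1, φ (t * s z) := hGz.trans hGsz.symm
    _ = _ := by rw [← intervalIntegral.integral_const_mul]; rfl

theorem lemniscatic_integral_formula
    (s : ℂ → ℂ)
    (hsA : AnalyticOnNhd ℂ s (Metric.ball (0 : ℂ) ((2 : ℝ) ^ (-(1 : ℝ) / 2))))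
    (hs0 : s 0 = 0)
    (hbd : ∀ z ∈ Metric.ball (0 : ℂ) ((2 : ℝ) ^ (-(1 : ℝ) / 2)), ‖s z‖ < 1)
    (hs : ∀ z ∈ Metric.ball (0 : ℂ) ((2 : ℝ) ^ (-(1 : ℝ) / 2)),
      HasDerivAt s ((1 - s z ^ 4) ^ ((1 : ℂ) / 2)) z) :
    ∀ z ∈ Metric.ball (0 : ℂ) ((2 : ℝ) ^ (-(1 : ℝ) / 2)),
      z = ∫ t in (0 : ℝ)..1, s z / ((1 - ((t : ℂ) * s z) ^ 4) ^ ((1 : ℂ) / 2)) :=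
  lemniscatic_integral_formula_general s hs0 hbd hs
end
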